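/- There exist a qubit state ρ and self-adjoint operators A, B on ℂ² such that the two orderings of operational joint probabilities coincide (tr[P_A(a)ρP_A(a)P_B(b)] = tr[P_B(b)ρP_B(b)P_A(a)] for all a, b) yet tr[ρ[A,B]] ≠ 0 and tr[−([A,B])²ρ] ≠ 0. Concretely, ρ = |y+⟩⟨y+| (the +1 eigenstate of σ_y), A = σ_z, B = cos θ σ_z + sin θ σ_x with θ ∉ {0, π} provide such an example. -/

import Mathlib

open Matrix Complex
open scoped ComplexOrder

/-- Spectral projection of a dichotomic (`M² = 1`) observable `M` onto eigenvalue `s ∈ {±1}`. -/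
noncomputable def proj (M : Matrix (Fin 2) (Fin 2) ℂ) (s : ℂ) : Matrix (Fin 2) (Fin 2) ℂ :=
  (2 : ℂ)⁻¹ • (1 + s • M)

/-!
Take `ρ = |y+⟩⟨y+| = P_{σ_y}(1)`, `A = σ_z` and `B = σ_x` (the case `θ = π/2`). Since `A` and `B`
anticommute, `B P_A(s) = P_A(-s) B`, so `P_A(s) B P_A(s) = 0` and `P_A(s) P_B(t) P_A(s) = P_A(s) / 2`.
By cyclicity of the trace both orderings reduce to `tr[ρ P_A(s)] / 2 = (1 + s⟨A⟩_ρ) / 4` and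
`(1 + t⟨B⟩_ρ) / 4`, which agree because `⟨σ_z⟩_ρ = ⟨σ_x⟩_ρ = 0`. On the other hand
`[σ_z, σ_x] = 2iσ_y` has expectation `2i` in `ρ`, and `-[A, B]² = 4` for anticommuting involutions.
-/

section Anticommuting

variable {R : Type*} [Ring R] {a b : R}

theorem commutator_mul_self_of_anticomm (ha : a * a = 1) (hb : b * b = 1)
    (hab : a * b = -(b * a)) : (a * b - b * a) * (a * b - b * a) = -4 := by
  have hba : b * a = -(a * b) := by rw [hab, neg_neg]
  have hsq : a * b * (a * b) = -1 :=
    calc a * b * (a * b) = a * (b * a) * b := by noncomm_ring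
      _ = -(a * a * (b * b)) := by rw [hba]; noncomm_ring
      _ = -1 := by rw [ha, hb, one_mul]
  calc (a * b - b * a) * (a * b - b * a) = 4 * (a * b * (a * b)) := by rw [hba]; noncomm_ring
    _ = -4 := by rw [hsq, mul_neg_one]

end Anticommuting

section Proj

variable {A B ρ : Matrix (Fin 2) (Fin 2) ℂ} {s t : ℂ}

theorem proj_mul_proj_self (hA : A * A = 1) (hs : s * s = 1) : proj A s * proj A s = proj A s := by
  simp only [proj, smul_mul_smul, add_mul, mul_add, one_mul, mul_one, hA, hs]
  module

theorem proj_mul_proj_neg (hA : A * A = 1) (hs : s * s = 1) : proj A s * proj A (-s) = 0 := by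
  simp only [proj, smul_mul_smul, add_mul, mul_add, one_mul, mul_one, hA, mul_neg, hs]
  module

theorem mul_proj_of_anticomm (hAB : A * B = -(B * A)) : B * proj A s = proj A (-s) * B := by
  simp only [proj, mul_smul_comm, smul_mul_assoc, mul_add, add_mul, mul_one, one_mul, hAB]
  module

theorem proj_mul_proj_mul_proj_of_anticomm (hA : A * A = 1) (hs : s * s = 1)
    (hAB : A * B = -(B * A)) : proj A s * proj B t * proj A s = (2 : ℂ)⁻¹ • proj A s := by
  have hkill : proj A s * (B * proj A s) = 0 := by
    rw [mul_proj_of_anticomm hAB, ← mul_assoc, proj_mul_proj_neg hA hs, zero_mul]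
  calc proj A s * proj B t * proj A s
      = (2 : ℂ)⁻¹ • (proj A s * proj A s + t • (proj A s * (B * proj A s))) := by
        rw [proj.eq_1 B]
        simp only [mul_smul_comm, smul_mul_assoc, mul_add, add_mul, mul_one, mul_assoc]
    _ = (2 : ℂ)⁻¹ • proj A s := by rw [hkill, proj_mul_proj_self hA hs, smul_zero, add_zero]

theorem trace_proj_mul_mul_proj_mul_proj_of_anticomm (hA : A * A = 1) (hs : s * s = 1)
    (hAB : A * B = -(B * A)) (hρA : (ρ * A).trace = 0) :
    (proj A s * ρ * proj A s * proj B t).trace = ρ.trace / 4 := by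
  calc (proj A s * ρ * proj A s * proj B t).trace
      = (ρ * (proj A s * proj B t * proj A s)).trace := by
        rw [mul_assoc, mul_assoc, trace_mul_comm, mul_assoc]
    _ = ρ.trace / 4 := by
        rw [proj_mul_proj_mul_proj_of_anticomm hA hs hAB]
        simp only [proj, mul_smul_comm, mul_add, mul_one, trace_smul, trace_add, hρA, smul_eq_mul]
        ring

theorem isHermitian_proj (hA : A.IsHermitian) (hs : star s = s) : (proj A s).IsHermitian := by
  simp only [IsHermitian, proj, conjTranspose_smul, conjTranspose_add, conjTranspose_one, hA.eq, hs,
    star_inv₀, star_ofNat]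

theorem posSemidef_proj (hA : A.IsHermitian) (hA2 : A * A = 1) (hs : star s = s) (hs2 : s * s = 1) :
    (proj A s).PosSemidef := by
  have h : proj A s = (proj A s)ᴴ * proj A s := by
    rw [(isHermitian_proj hA hs).eq, proj_mul_proj_self hA2 hs2]
  exact h ▸ posSemidef_conjTranspose_mul_self _

end Proj

def pauliX : Matrix (Fin 2) (Fin 2) ℂ := !![0, 1; 1, 0]
def pauliY : Matrix (Fin 2) (Fin 2) ℂ := !![0, -I; I, 0]
def pauliZ : Matrix (Fin 2) (Fin 2) ℂ := !![1, 0; 0, -1]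

theorem pauliX_isHermitian : pauliX.IsHermitian := by
  ext i j; fin_cases i <;> fin_cases j <;> simp [pauliX]

theorem pauliY_isHermitian : pauliY.IsHermitian := by
  ext i j; fin_cases i <;> fin_cases j <;> simp [pauliY]

theorem pauliZ_isHermitian : pauliZ.IsHermitian := by
  ext i j; fin_cases i <;> fin_cases j <;> simp [pauliZ]

theorem pauliX_mul_self : pauliX * pauliX = 1 := by
  ext i j; fin_cases i <;> fin_cases j <;> simp [pauliX]

theorem pauliY_mul_self : pauliY * pauliY = 1 := by
  ext i j; fin_cases i <;> fin_cases j <;> simp [pauliY]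

theorem pauliZ_mul_self : pauliZ * pauliZ = 1 := by
  ext i j; fin_cases i <;> fin_cases j <;> simp [pauliZ]

theorem pauliZ_mul_pauliX : pauliZ * pauliX = I • pauliY := by
  ext i j; fin_cases i <;> fin_cases j <;> simp [pauliX, pauliY, pauliZ]

theorem pauliX_mul_pauliZ : pauliX * pauliZ = -(I • pauliY) := by
  ext i j; fin_cases i <;> fin_cases j <;> simp [pauliX, pauliY, pauliZ]

theorem trace_proj_pauliY : (proj pauliY 1).trace = 1 := by
  simp [proj, pauliY, trace_fin_two]

theorem trace_proj_pauliY_mul_pauliX : (proj pauliY 1 * pauliX).trace = 0 := by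
  simp [proj, pauliY, pauliX, trace_fin_two, mul_apply, Fin.sum_univ_two, one_apply]

theorem trace_proj_pauliY_mul_pauliY : (proj pauliY 1 * pauliY).trace = 1 := by
  simp [proj, pauliY, trace_fin_two, mul_apply, Fin.sum_univ_two, one_apply, mul_assoc]; norm_num

theorem trace_proj_pauliY_mul_pauliZ : (proj pauliY 1 * pauliZ).trace = 0 := by
  simp [proj, pauliY, pauliZ, trace_fin_two, mul_apply, Fin.sum_univ_two, one_apply]

/-- There exist a qubit state `ρ` and dichotomic observables `A`, `B` such that the two
orderings of operational joint probabilities coincide, yet `tr[ρ[A,B]] ≠ 0` and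
`tr[−[A,B]² ρ] ≠ 0` (state-dependent non-commutativity does not vanish). -/
theorem coincidence_without_commutativity :
    ∃ (ρ A B : Matrix (Fin 2) (Fin 2) ℂ),
      ρ.PosSemidef ∧ ρ.trace = 1 ∧
      A.IsHermitian ∧ B.IsHermitian ∧ A * A = 1 ∧ B * B = 1 ∧
      (∀ s t : ℂ, (s = 1 ∨ s = -1) → (t = 1 ∨ t = -1) →
        (proj A s * ρ * proj A s * proj B t).trace
          = (proj B t * ρ * proj B t * proj A s).trace) ∧
      (ρ * (A * B - B * A)).trace ≠ 0 ∧
      ((-((A * B - B * A) * (A * B - B * A))) * ρ).trace ≠ 0 := by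
  have hZX : pauliZ * pauliX = -(pauliX * pauliZ) := by
    rw [pauliZ_mul_pauliX, pauliX_mul_pauliZ, neg_neg]
  have hXZ : pauliX * pauliZ = -(pauliZ * pauliX) := by rw [hZX, neg_neg]
  have hcomm : pauliZ * pauliX - pauliX * pauliZ = (2 * I) • pauliY := by
    rw [pauliZ_mul_pauliX, pauliX_mul_pauliZ]; module
  refine ⟨proj pauliY 1, pauliZ, pauliX,
    posSemidef_proj pauliY_isHermitian pauliY_mul_self (star_one ℂ) (one_mul 1), trace_proj_pauliY,
    pauliZ_isHermitian, pauliX_isHermitian, pauliZ_mul_self, pauliX_mul_self, ?_, ?_, ?_⟩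
  · intro s t hs ht
    rw [trace_proj_mul_mul_proj_mul_proj_of_anticomm pauliZ_mul_self (mul_self_eq_one_iff.mpr hs)
        hZX trace_proj_pauliY_mul_pauliZ,
      trace_proj_mul_mul_proj_mul_proj_of_anticomm pauliX_mul_self (mul_self_eq_one_iff.mpr ht)
        hXZ trace_proj_pauliY_mul_pauliX]
  · rw [hcomm, mul_smul_comm, trace_smul, trace_proj_pauliY_mul_pauliY]
    simp
  · rw [commutator_mul_self_of_anticomm pauliZ_mul_self pauliX_mul_self hZX, neg_neg]
    have h4 : (4 * proj pauliY 1).trace = 4 * (proj pauliY 1).trace := by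
      simp [trace_fin_two, mul_apply, ofNat_apply]
      ring
    rw [h4, trace_proj_pauliY]
    norm_num
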